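/- For fixed data with at least one uncensored observation, the negative log-likelihood of the Normal AFT model in the parameterization (α, τ) ↦ (n₀/2)·log(2π/τ²) + (1/2)·Σ_{uncensored}(τ yᵢ - xᵢᵀα)² - Σ_{censored} log Φ(xᵢᵀα - τ yᵢ) is a convex function of (α, τ) on ℝ^p × (0,∞). -/

import Mathlib

open Matrix

noncomputable def phi (t : ℝ) : ℝ := (Real.sqrt (2 * Real.pi))⁻¹ * Real.exp (-t ^ 2 / 2)

noncomputable def Phi (t : ℝ) : ℝ := ∫ u in Set.Iic t, phi u

/-!
`log Φ` is concave because `(log Φ)'' = -φ (tΦ + φ) / Φ²` and `tΦ(t) ≥ ∫_{u ≤ t} u φ(u) du = -φ(t)`.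
On `τ > 0` the first term is `(n₀/2) log 2π - n₀ log τ`, the squared residuals are convex quadratics
and the censored terms are `-log Φ` of linear functions of `(α, τ)`, so the sum is convex.
-/

open Real MeasureTheory Set Filter Topology

lemma phi_pos (t : ℝ) : 0 < phi t := by
  unfold phi; positivity

lemma continuous_phi : Continuous phi := by
  unfold phi; fun_prop

lemma integrable_phi : Integrable phi :=
  ((integrable_exp_neg_mul_sq (b := 2⁻¹) (by norm_num)).const_mul (√(2 * π))⁻¹).congr
    (.of_forall fun t => by simp only [phi]; ring_nf)

lemma integrable_id_mul_phi : Integrable (fun t : ℝ => t * phi t) :=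
  ((integrable_mul_exp_neg_mul_sq (b := 2⁻¹) (by norm_num)).const_mul (√(2 * π))⁻¹).congr
    (.of_forall fun t => by simp only [phi]; ring_nf)

lemma hasDerivAt_phi (t : ℝ) : HasDerivAt phi (-t * phi t) t := by
  have h : HasDerivAt (fun s : ℝ => -s ^ 2 / 2) (-t) t :=
    (((hasDerivAt_pow 2 t).neg).div_const 2).congr_deriv (by push_cast; ring)
  show HasDerivAt (fun s => (√(2 * π))⁻¹ * exp (-s ^ 2 / 2)) _ t
  exact (h.exp.const_mul _).congr_deriv (by simp only [phi]; ring)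

lemma tendsto_phi_atBot : Tendsto phi atBot (𝓝 0) := by
  have h : Tendsto (fun t : ℝ => -t ^ 2 / 2) atBot atBot := by
    have := (tendsto_pow_atTop (α := ℝ) two_ne_zero).comp tendsto_neg_atBot_atTop
    simpa [Function.comp_def, neg_div] using
      (tendsto_neg_atTop_atBot.comp this).atBot_div_const two_pos
  have := (tendsto_exp_atBot.comp h).const_mul (√(2 * π))⁻¹
  rwa [mul_zero] at this

lemma hasDerivAt_Phi (t : ℝ) : HasDerivAt Phi (phi t) t := by
  have h : Phi = fun s => Phi 0 + ∫ u in (0 : ℝ)..s, phi u := by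
    funext s
    rw [Phi, Phi, intervalIntegral.integral_Iic_sub_Iic integrable_phi.integrableOn
      integrable_phi.integrableOn |>.symm]
    ring
  rw [h]
  exact (intervalIntegral.integral_hasDerivAt_right integrable_phi.intervalIntegrable
    (continuous_phi.stronglyMeasurableAtFilter _ _) continuous_phi.continuousAt).const_add _

lemma Phi_pos (t : ℝ) : 0 < Phi t := by
  rw [Phi, setIntegral_pos_iff_support_of_nonneg_ae (.of_forall fun u => (phi_pos u).le)
    integrable_phi.integrableOn]
  simp [Function.support_eq_univ fun u => (phi_pos u).ne']

lemma setIntegral_Iic_mul_phi (t : ℝ) : ∫ u in Iic t, u * phi u = -phi t := by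
  have h := integral_Iic_of_hasDerivAt_of_tendsto (f := -phi) (a := t) (m := 0)
    continuous_phi.neg.continuousWithinAt
    (fun u _ => (hasDerivAt_phi u).neg.congr_deriv (by ring : -(-u * phi u) = u * phi u))
    integrable_id_mul_phi.integrableOn (by rw [← neg_zero]; exact tendsto_phi_atBot.neg)
  simpa using h

lemma neg_phi_le_mul_Phi (t : ℝ) : -phi t ≤ t * Phi t :=
  calc -phi t = ∫ u in Iic t, u * phi u := (setIntegral_Iic_mul_phi t).symm
    _ ≤ ∫ u in Iic t, t * phi u :=
      setIntegral_mono_on integrable_id_mul_phi.integrableOn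
        (integrable_phi.integrableOn.const_mul t) measurableSet_Iic
        fun u hu => mul_le_mul_of_nonneg_right hu (phi_pos u).le
    _ = t * Phi t := integral_const_mul t _

lemma concaveOn_log_Phi : ConcaveOn ℝ univ fun t => log (Phi t) := by
  have hlog (t : ℝ) : HasDerivAt (fun s => log (Phi s)) (phi t / Phi t) t :=
    (hasDerivAt_Phi t).log (Phi_pos t).ne'
  refine concaveOn_of_hasDerivWithinAt2_nonpos convex_univ
    (continuous_iff_continuousAt.2 fun t => (hlog t).continuousAt).continuousOn
    (fun t _ => (hlog t).hasDerivWithinAt)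
    (fun t _ => ((hasDerivAt_phi t).div (hasDerivAt_Phi t) (Phi_pos t).ne').hasDerivWithinAt)
    fun t _ => div_nonpos_of_nonpos_of_nonneg
      (by nlinarith [neg_phi_le_mul_Phi t, phi_pos t]) (sq_nonneg _)

section FinsetSum

variable {𝕜 E β ι : Type*} [Semiring 𝕜] [PartialOrder 𝕜] [AddCommMonoid E] [AddCommMonoid β]
  [PartialOrder β] [IsOrderedAddMonoid β] [SMul 𝕜 E] [Module 𝕜 β] {s : Set E}

theorem ConvexOn.fun_sum (hs : Convex 𝕜 s) {t : Finset ι} {f : ι → E → β}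
    (h : ∀ i ∈ t, ConvexOn 𝕜 s (f i)) : ConvexOn 𝕜 s fun q => ∑ i ∈ t, f i q := by
  rw [← Finset.sum_fn]
  exact Finset.sum_induction f (ConvexOn 𝕜 s) (fun _ _ => ConvexOn.add) (convexOn_const 0 hs) h

theorem ConcaveOn.fun_sum (hs : Convex 𝕜 s) {t : Finset ι} {f : ι → E → β}
    (h : ∀ i ∈ t, ConcaveOn 𝕜 s (f i)) : ConcaveOn 𝕜 s fun q => ∑ i ∈ t, f i q := by
  rw [← Finset.sum_fn]
  exact Finset.sum_induction f (ConcaveOn 𝕜 s) (fun _ _ => ConcaveOn.add) (concaveOn_const 0 hs) h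

end FinsetSum

lemma convexOn_log_div_sq {c : ℝ} (hc : c ≠ 0) : ConvexOn ℝ (Ioi 0) fun t => log (c / t ^ 2) :=
  ((convexOn_const (log c) (convex_Ioi 0)).sub
      (strictConcaveOn_log_Ioi.concaveOn.smul (by norm_num : (0 : ℝ) ≤ 2))).congr
    fun t ht => by
      simp only [Pi.sub_apply, smul_eq_mul]
      rw [log_div hc (pow_ne_zero 2 (ne_of_gt ht)), log_pow, Nat.cast_ofNat]

def dotProductSubMulₗ {p : ℕ} (x : Fin p → ℝ) (y : ℝ) : (Fin p → ℝ) × ℝ →ₗ[ℝ] ℝ where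
  toFun q := x ⬝ᵥ q.1 - q.2 * y
  map_add' q r := by simp only [Prod.fst_add, Prod.snd_add, dotProduct_add]; ring
  map_smul' c q := by
    simp only [Prod.smul_fst, Prod.smul_snd, dotProduct_smul, smul_eq_mul, RingHom.id_apply]; ring

theorem normalAFT_negLogLik_convexOn_general
    (n p : ℕ) (y : Fin n → ℝ) (x : Fin n → (Fin p → ℝ)) (d : Fin n → Bool)
    (n₀ : ℕ) :
    ConvexOn ℝ {q : (Fin p → ℝ) × ℝ | 0 < q.2}
      (fun q : (Fin p → ℝ) × ℝ =>
        ((n₀ : ℝ) / 2) * Real.log (2 * Real.pi / q.2 ^ 2)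
          + (1 / 2) * ∑ i ∈ Finset.univ.filter (fun i => d i = true),
              (q.2 * y i - x i ⬝ᵥ q.1) ^ 2
          - ∑ i ∈ Finset.univ.filter (fun i => d i = false),
              Real.log (Phi (x i ⬝ᵥ q.1 - q.2 * y i))) := by
  set S : Set ((Fin p → ℝ) × ℝ) := {q | 0 < q.2}
  have hS : Convex ℝ S := (convex_Ioi 0).linear_preimage (LinearMap.snd ℝ _ ℝ)
  have hlog : ConvexOn ℝ S fun q => ((n₀ : ℝ) / 2) * log (2 * π / q.2 ^ 2) :=
    ((convexOn_log_div_sq (by positivity)).comp_linearMap (LinearMap.snd ℝ _ ℝ)).smul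
      (by positivity)
  have hsq : ConvexOn ℝ S fun q =>
      (1 / 2 : ℝ) * ∑ i ∈ Finset.univ.filter (fun i => d i = true), (q.2 * y i - x i ⬝ᵥ q.1) ^ 2 :=
    ConvexOn.smul (by norm_num) <| ConvexOn.fun_sum hS fun i _ =>
      ((even_two.convexOn_pow.comp_linearMap (dotProductSubMulₗ (x i) (y i))).subset
        (subset_univ _) hS).congr fun q _ => by
          simp only [Function.comp_apply, dotProductSubMulₗ, LinearMap.coe_mk, AddHom.coe_mk]; ring
  have hPhi : ConcaveOn ℝ S fun q =>
      ∑ i ∈ Finset.univ.filter (fun i => d i = false), log (Phi (x i ⬝ᵥ q.1 - q.2 * y i)) :=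
    ConcaveOn.fun_sum hS fun i _ =>
      (concaveOn_log_Phi.comp_linearMap (dotProductSubMulₗ (x i) (y i))).subset (subset_univ _) hS
  exact (hlog.add hsq).sub hPhi

/-- The negative log-likelihood of the Normal AFT model, in the `(α, τ)`
parameterization, is convex on `ℝ^p × (0, ∞)` whenever there is at least one
uncensored observation. -/
theorem normalAFT_negLogLik_convexOn
    (n p : ℕ) (y : Fin n → ℝ) (x : Fin n → (Fin p → ℝ)) (d : Fin n → Bool)
    (n₀ : ℕ) (hn₀ : n₀ = (Finset.univ.filter (fun i => d i = true)).card)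
    (hpos : 1 ≤ n₀) :
    ConvexOn ℝ {q : (Fin p → ℝ) × ℝ | 0 < q.2}
      (fun q : (Fin p → ℝ) × ℝ =>
        ((n₀ : ℝ) / 2) * Real.log (2 * Real.pi / q.2 ^ 2)
          + (1 / 2) * ∑ i ∈ Finset.univ.filter (fun i => d i = true),
              (q.2 * y i - x i ⬝ᵥ q.1) ^ 2
          - ∑ i ∈ Finset.univ.filter (fun i => d i = false),
              Real.log (Phi (x i ⬝ᵥ q.1 - q.2 * y i))) :=
  normalAFT_negLogLik_convexOn_general n p y x d n₀
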